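/- Let f(x) ∈ (ℤ/p^a)[x] be monic with p ∤ f, and suppose f = (x − c₁)^{ℓ₁} ⋯ (x − c_s)^{ℓ_s} · g where the cᵢ are pairwise distinct mod p and g has no root in ℤ/p^a whose reduction mod p is a root of g mod p (equivalently, g mod p has no linear factor). If γ ∈ ℤ/p^a is a root of f, then there exists a unique i with γ ≡ cᵢ (mod p), and moreover (γ − cᵢ)^{ℓᵢ} = 0, so γ = cᵢ + h·p^{⌈a/ℓᵢ⌉} for some h ∈ ℤ/p^a. -/
import Mathlib

lemma nilpotent_form_aux (p a ℓ : ℕ) (hp : p.Prime) (ha : 1 ≤ a) (hℓ : 1 ≤ ℓ)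
    (x : ZMod (p ^ a)) (hx : x ^ ℓ = 0) :
    ∃ h : ZMod (p ^ a), x = h * (p : ZMod (p ^ a)) ^ ((a + ℓ - 1) / ℓ) := by
  haveI : NeZero (p ^ a) := ⟨pow_ne_zero _ hp.pos.ne'⟩
  set n := x.val with hn
  have hxn : ((n : ℕ) : ZMod (p ^ a)) = x := by simp [hn, ZMod.natCast_val, ZMod.cast_id]
  by_cases h0 : n = 0
  · exact ⟨0, by simp [← hxn, h0]⟩
  · have hdvd : p ^ a ∣ n ^ ℓ := by
      have : ((n ^ ℓ : ℕ) : ZMod (p ^ a)) = 0 := by push_cast; rw [hxn, hx]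
      exact (ZMod.natCast_eq_zero_iff _ _).mp this
    have hfa : a ≤ (n ^ ℓ).factorization p :=
      (Nat.Prime.pow_dvd_iff_le_factorization hp (pow_ne_zero _ h0)).mp hdvd
    rw [Nat.factorization_pow] at hfa
    have hfa' : a ≤ ℓ * n.factorization p := by simpa using hfa
    have hm : (a + ℓ - 1) / ℓ ≤ n.factorization p := by
      rw [Nat.div_le_iff_le_mul_add_pred (by omega)]
      calc a + ℓ - 1 ≤ ℓ * n.factorization p + ℓ - 1 := by omega
        _ ≤ ℓ * n.factorization p + (ℓ - 1) := by omega
    have : p ^ ((a + ℓ - 1) / ℓ) ∣ n :=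
      (Nat.Prime.pow_dvd_iff_le_factorization hp h0).mpr hm
    obtain ⟨k, hk⟩ := this
    exact ⟨(k : ZMod (p ^ a)), by rw [← hxn, hk]; push_cast; ring⟩

lemma isUnit_of_cast_ne_aux (p a : ℕ) (hp : p.Prime) (ha : a ≠ 0) (x : ZMod (p ^ a))
    (hx : ZMod.castHom (dvd_pow_self p ha) (ZMod p) x ≠ 0) : IsUnit x := by
  haveI : NeZero (p ^ a) := ⟨pow_ne_zero _ hp.pos.ne'⟩
  have hxn : ((x.val : ℕ) : ZMod (p ^ a)) = x := by simp [ZMod.natCast_val, ZMod.cast_id]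
  rw [← hxn]
  rw [ZMod.isUnit_iff_coprime]
  apply Nat.Coprime.pow_right
  rw [Nat.coprime_comm, hp.coprime_iff_not_dvd]
  intro hdvd
  apply hx
  have : ZMod.castHom (dvd_pow_self p ha) (ZMod p) x = ((x.val : ℕ) : ZMod p) := by
    rw [← hxn]; simp
  rw [this]
  exact (ZMod.natCast_eq_zero_iff _ _).mpr hdvd

theorem linear_factor_form (p a s : ℕ) (hp : p.Prime) (ha : 1 ≤ a)
    (f g : Polynomial (ZMod (p ^ a))) (hf : f.Monic)
    (c : Fin s → ZMod (p ^ a)) (ℓ : Fin s → ℕ) (hℓ : ∀ i, 1 ≤ ℓ i)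
    (hfac : f = (∏ i, (Polynomial.X - Polynomial.C (c i)) ^ (ℓ i)) * g)
    (hdist : ∀ i j, i ≠ j →
      ZMod.castHom (dvd_pow_self p (by omega)) (ZMod p) (c i) ≠
      ZMod.castHom (dvd_pow_self p (by omega)) (ZMod p) (c j))
    (hg : ∀ β : ZMod p,
      (g.map (ZMod.castHom (dvd_pow_self p (by omega)) (ZMod p))).eval β ≠ 0)
    (γ : ZMod (p ^ a)) (hγ : f.eval γ = 0) :
    (∃! i : Fin s,
      ZMod.castHom (dvd_pow_self p (by omega)) (ZMod p) (γ - c i) = 0) ∧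
    (∀ i : Fin s,
      ZMod.castHom (dvd_pow_self p (by omega)) (ZMod p) (γ - c i) = 0 →
      (γ - c i) ^ (ℓ i) = 0 ∧
      ∃ h : ZMod (p ^ a),
        γ = c i + h * (p : ZMod (p ^ a)) ^ ((a + ℓ i - 1) / ℓ i)) := by
  haveI : Fact p.Prime := ⟨hp⟩
  have ha' : a ≠ 0 := by omega
  set φ := ZMod.castHom (dvd_pow_self p ha') (ZMod p) with hφdef
  -- evaluation identity
  have heval : (∏ i, (γ - c i) ^ (ℓ i)) * g.eval γ = 0 := by
    rw [hfac] at hγ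
    simpa [Polynomial.eval_prod] using hγ
  -- g.eval γ has nonzero image, hence is a unit
  have hgγ : φ (g.eval γ) ≠ 0 := by
    have : φ (g.eval γ) = (g.map φ).eval (φ γ) := by
      rw [Polynomial.eval_map, Polynomial.eval₂_hom]
    rw [this]
    exact hg (φ γ)
  have hgunit : IsUnit (g.eval γ) := isUnit_of_cast_ne_aux p a hp ha' _ hgγ
  -- mod p product vanishes
  have hprod0 : (∏ i, (φ γ - φ (c i)) ^ (ℓ i)) = 0 := by
    have h1 : φ ((∏ i, (γ - c i) ^ (ℓ i)) * g.eval γ) = 0 := by rw [heval]; simp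
    rw [map_mul, map_prod] at h1
    simp only [map_pow, map_sub] at h1
    rcases mul_eq_zero.mp h1 with h | h
    · exact h
    · exact absurd h hgγ
  -- existence of i
  obtain ⟨i0, -, hi0⟩ := Finset.prod_eq_zero_iff.mp hprod0
  have hi0' : φ (γ - c i0) = 0 := by
    have := pow_eq_zero_iff (n := ℓ i0) (by have := hℓ i0; omega) |>.mp hi0
    rw [map_sub]; exact this
  refine ⟨⟨i0, hi0', ?_⟩, ?_⟩
  · -- uniqueness
    intro j hj
    by_contra hne
    apply hdist j i0 hne
    rw [map_sub] at hj hi0'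
    have : φ (c j) = φ γ := by linear_combination -hj
    rw [this]
    linear_combination hi0'
  · -- second part
    intro i hi
    have hunit : IsUnit ((Finset.univ.erase i).prod (fun j => (γ - c j) ^ (ℓ j)) * g.eval γ) := by
      refine IsUnit.mul ?_ hgunit
      apply Finset.prod_induction _ IsUnit (fun _ _ => IsUnit.mul) isUnit_one
      intro j hj
      apply IsUnit.pow
      apply isUnit_of_cast_ne_aux p a hp ha'
      intro h0
      have hji : j ≠ i := (Finset.mem_erase.mp hj).1
      apply hdist j i hji
      rw [map_sub] at h0 hi
      have h1 : φ (c j) = φ γ := by linear_combination -h0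
      rw [h1]
      linear_combination hi
    have hkey : (γ - c i) ^ (ℓ i) = 0 := by
      have hsplit : (∏ j, (γ - c j) ^ (ℓ j)) =
          (γ - c i) ^ (ℓ i) * (Finset.univ.erase i).prod (fun j => (γ - c j) ^ (ℓ j)) :=
        (Finset.mul_prod_erase Finset.univ _ (Finset.mem_univ i)).symm
      have h2 : (γ - c i) ^ (ℓ i) *
          ((Finset.univ.erase i).prod (fun j => (γ - c j) ^ (ℓ j)) * g.eval γ) = 0 := by
        rw [← mul_assoc, ← hsplit]; exact heval
      exact (hunit.mul_left_eq_zero).mp h2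
    refine ⟨hkey, ?_⟩
    obtain ⟨h, hh⟩ := nilpotent_form_aux p a (ℓ i) hp ha (hℓ i) _ hkey
    exact ⟨h, by linear_combination hh⟩
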